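/- (Exponential decay at −∞.) Let U be a traveling wave with speed c. Then there exist constants ω > 0 and C > 0 such that U(ξ) ≤ C·exp(ω·ξ) for all ξ ≤ 0. -/

import Mathlib

open Real Set Filter

noncomputable def delta1 (α : ℝ) : ℝ := Real.cos α
noncomputable def delta2 (α : ℝ) : ℝ := (1/2) * Real.cos α + (Real.sqrt 3 / 2) * Real.sin α
noncomputable def delta3 (α : ℝ) : ℝ := (1/2) * Real.cos α - (Real.sqrt 3 / 2) * Real.sin α

/-- The function g_α(λ) from the minimal wave speed formula, with `a` playing the role of f'(0). -/
noncomputable def gfun (a α l : ℝ) : ℝ :=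
  (1/6) * ((Real.exp (l * delta1 α) + Real.exp (-(l * delta1 α)))
    + (Real.exp (l * delta2 α) + Real.exp (-(l * delta2 α)))
    + (Real.exp (l * delta3 α) + Real.exp (-(l * delta3 α)))) - 1 + a

/-- The minimal wave speed c*(α) = inf_{λ>0} g_α(λ)/λ. -/
noncomputable def cstar (a α : ℝ) : ℝ := sInf {c : ℝ | ∃ l : ℝ, 0 < l ∧ c = gfun a α l / l}

/-- The discrete diffusion operator on the hexagonal lattice, in direction α. -/
noncomputable def Dh (α : ℝ) (U : ℝ → ℝ) (ξ : ℝ) : ℝ :=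
  (U (ξ + delta1 α) + U (ξ - delta1 α)) + (U (ξ + delta2 α) + U (ξ - delta2 α))
    + (U (ξ + delta3 α) + U (ξ - delta3 α)) - 6 * U ξ

/-- Fisher-KPP conditions: f is C¹ on [0,1] with derivative f', f(0)=f(1)=0, f'(0)>0,
and 0 < f(s) ≤ f'(0)·s on (0,1). -/
def FisherKPP (f f' : ℝ → ℝ) : Prop :=
  (∀ s ∈ Set.Icc (0:ℝ) 1, HasDerivAt f (f' s) s) ∧
  ContinuousOn f' (Set.Icc (0:ℝ) 1) ∧
  f 0 = 0 ∧ f 1 = 0 ∧ 0 < f' 0 ∧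
  (∀ s ∈ Set.Ioo (0:ℝ) 1, 0 < f s ∧ f s ≤ f' 0 * s)

/-- A traveling wave with speed c: a C¹ function U : ℝ → [0,1] solving
c·U′ = (1/6)·𝒟_h[U] + f(U) with limits 0 at −∞ and 1 at +∞. -/
def IsTravelingWave (α : ℝ) (f : ℝ → ℝ) (c : ℝ) (U : ℝ → ℝ) : Prop :=
  ContDiff ℝ 1 U ∧ (∀ ξ, U ξ ∈ Set.Icc (0:ℝ) 1) ∧
  (∀ ξ, c * deriv U ξ = (1/6) * Dh α U ξ + f (U ξ)) ∧
  Filter.Tendsto U Filter.atBot (nhds 0) ∧ Filter.Tendsto U Filter.atTop (nhds 1)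

/-!
Let `V` and `F` be the primitives of `U` and `f ∘ U` vanishing at `-∞` (they exist because near
`-∞` the KPP condition gives `f(U) ≥ (f'(0)/2)·U`, while the integrated wave equation bounds
`∫ f(U)`). Integrating the wave equation from `-∞` gives `c·U = (1/6)·𝒟_h[V] + F`, and letting
`ξ → +∞` shows `c = ∫ f(U) > 0`. Since `|δ_m| ≤ 1` and `V` is increasing,
`𝒟_h[V](ξ) ≥ 6·(V(ξ-1) - V(ξ))`, so near `-∞` we get the delay inequality
`(f'(0)/2)·V(ξ) ≤ c·V'(ξ) + V(ξ) - V(ξ-1)`. At a mean value point of `V` on `[z-1, z]` it yields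
`V(z-2) ≤ θ·V(z)` with `θ = (c+1)/(f'(0)/2 + c + 1) < 1`, hence exponential decay of `V`, which
passes to `U` through `c·U(ξ) ≤ (1 + f'(0))·V(ξ+1)`.
-/

open Topology

lemma monotoneOn_Iic_of_hasDerivAt_nonneg {φ φ' : ℝ → ℝ} {a : ℝ}
    (hφ : ∀ x, HasDerivAt φ (φ' x) x) (hφ' : ∀ x ≤ a, 0 ≤ φ' x) : MonotoneOn φ (Iic a) :=
  monotoneOn_of_hasDerivWithinAt_nonneg (convex_Iic a)
    (fun x _ => (hφ x).continuousAt.continuousWithinAt)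
    (fun x _ => (hφ x).hasDerivWithinAt)
    (fun x hx => hφ' x (interior_subset hx : x ∈ Iic a))

lemma le_of_hasDerivAt_le_of_tendsto_atBot {V W v w : ℝ → ℝ} {a : ℝ}
    (hV : ∀ x, HasDerivAt V (v x) x) (hW : ∀ x, HasDerivAt W (w x) x)
    (hvw : ∀ x ≤ a, v x ≤ w x) (hV0 : Tendsto V atBot (𝓝 0)) (hW0 : Tendsto W atBot (𝓝 0)) :
    ∀ x ≤ a, V x ≤ W x := by
  have hmono : MonotoneOn (fun x => W x - V x) (Iic a) :=
    monotoneOn_Iic_of_hasDerivAt_nonneg (fun x => (hW x).sub (hV x))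
      (fun x hx => sub_nonneg.2 (hvw x hx))
  intro x hx
  have hlim : Tendsto (fun x => W x - V x) atBot (𝓝 0) := by simpa using hW0.sub hV0
  exact sub_nonneg.1 <| le_of_tendsto hlim <| (eventually_le_atBot x).mono
    fun y hy => hmono (hy.trans hx) hx hy

lemma exists_hasDerivAt_tendsto_atBot_zero {G g : ℝ → ℝ} {a B : ℝ}
    (hG : ∀ x, HasDerivAt G (g x) x) (hg : 0 ≤ g) (hB : ∀ x ≤ a, B ≤ G x) :
    ∃ V : ℝ → ℝ, (∀ x, HasDerivAt V (g x) x) ∧ Tendsto V atBot (𝓝 0) := by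
  have hmono : Monotone G := monotone_of_hasDerivAt_nonneg hG hg
  have hbdd : BddBelow (range G) := by
    refine ⟨min B (G a), ?_⟩
    rintro _ ⟨x, rfl⟩
    rcases le_total x a with hx | hx
    · exact min_le_of_left_le (hB x hx)
    · exact min_le_of_right_le (hmono hx)
  refine ⟨fun x => G x - ⨅ y, G y, fun x => (hG x).sub_const _, ?_⟩
  simpa using (tendsto_atBot_ciInf hmono hbdd).sub_const (⨅ y, G y)

lemma tendsto_add_sub_of_hasDerivAt {G g : ℝ → ℝ} {L : ℝ}
    (hG : ∀ x, HasDerivAt G (g x) x) (hg : Tendsto g atTop (𝓝 L)) (a : ℝ) :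
    Tendsto (fun x => G (x + a) - G x) atTop (𝓝 (a * L)) := by
  rw [Metric.tendsto_atTop]
  intro ε hε
  obtain ⟨N, hN⟩ := Metric.tendsto_atTop.1 hg (ε / (|a| + 1)) (by positivity)
  refine ⟨N + |a|, fun x hx => ?_⟩
  have hderiv : ∀ y ∈ Ici N, HasDerivWithinAt (fun y => G y - y * L) (g y - L) (Ici N) y :=
    fun y _ => ((hG y).sub ((hasDerivAt_id y).mul_const L)).hasDerivWithinAt.congr_deriv
      (by simp)
  have hbound := (convex_Ici N).norm_image_sub_le_of_norm_hasDerivWithin_le hderiv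
    (fun y hy => (hN y hy).le) (x := x) (y := x + a)
    (by simp only [mem_Ici]; linarith [abs_nonneg a])
    (by simp only [mem_Ici]; linarith [neg_abs_le a])
  rw [Real.dist_eq]
  calc |G (x + a) - G x - a * L| = ‖G (x + a) - (x + a) * L - (G x - x * L)‖ := by
        rw [Real.norm_eq_abs]; ring_nf
    _ ≤ ε / (|a| + 1) * ‖x + a - x‖ := hbound
    _ = ε * (|a| / (|a| + 1)) := by rw [add_sub_cancel_left, Real.norm_eq_abs]; ring
    _ < ε := mul_lt_of_lt_one_right hε ((div_lt_one (by positivity)).2 (lt_add_one _))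

lemma Monotone.pos_of_tendsto_of_hasDerivAt {F : ℝ → ℝ} {c d x : ℝ} (hF : Monotone F)
    (hbot : Tendsto F atBot (𝓝 0)) (htop : Tendsto F atTop (𝓝 c)) (hd : HasDerivAt F d x)
    (hd0 : d ≠ 0) : 0 < c := by
  by_contra! hc
  have hzero : F = fun _ => 0 := funext fun y =>
    le_antisymm ((hF.ge_of_tendsto htop y).trans hc) (hF.le_of_tendsto hbot y)
  rw [hzero] at hd
  exact hd0 (hd.unique (hasDerivAt_const x 0))

lemma eventually_mul_le_of_hasDerivAt {f : ℝ → ℝ} {a β : ℝ} (hf : HasDerivAt f a 0)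
    (hf0 : f 0 = 0) (hβ : β < a) : ∀ᶠ s in 𝓝[≥] 0, β * s ≤ f s := by
  have hlo := (hasDerivAt_iff_isLittleO.1 hf).def (sub_pos.2 hβ)
  filter_upwards [nhdsWithin_le_nhds hlo, self_mem_nhdsWithin] with s hs (hs0 : 0 ≤ s)
  simp only [hf0, sub_zero, smul_eq_mul, Real.norm_eq_abs, abs_of_nonneg hs0] at hs
  nlinarith [neg_abs_le (f s - s * a)]

lemma le_div_mul_of_delay_ineq {V U : ℝ → ℝ} {β c ξ₀ : ℝ} (hβ : 0 < β) (hc : 0 ≤ c)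
    (hV : ∀ x, HasDerivAt V (U x) x) (hmono : Monotone V)
    (hineq : ∀ ξ ≤ ξ₀, β * V ξ ≤ c * U ξ + (V ξ - V (ξ - 1))) :
    ∀ z ≤ ξ₀, V (z - 2) ≤ (c + 1) / (β + c + 1) * V z := by
  intro z hz
  obtain ⟨η, ⟨hη₁, hη₂⟩, hUη⟩ := exists_hasDerivAt_eq_slope V U (sub_one_lt z)
    (fun x _ => (hV x).continuousAt.continuousWithinAt) (fun x _ => hV x)
  rw [sub_sub_cancel, div_one] at hUη
  have h₁ := hineq η (by linarith)
  have h₂ : V (z - 1) ≤ V η := hmono hη₁.le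
  have h₃ : V η ≤ V z := hmono hη₂.le
  have h₄ : V (z - 2) ≤ V (η - 1) := hmono (by linarith)
  have h₅ : V (z - 2) ≤ V (z - 1) := hmono (by linarith)
  rw [div_mul_eq_mul_div, le_div_iff₀ (by linarith)]
  nlinarith

lemma exists_exp_bound_of_le_mul_shift {V : ℝ → ℝ} {θ L z₀ : ℝ} (hmono : Monotone V)
    (hθ₀ : 0 < θ) (hθ₁ : θ < 1) (hL : 0 < L) (hshift : ∀ z ≤ z₀, V (z - L) ≤ θ * V z) :
    ∃ ω C : ℝ, 0 < ω ∧ 0 < C ∧ ∀ ξ ≤ z₀, V ξ ≤ C * exp (ω * ξ) := by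
  set ω := -log θ / L
  have hω : 0 < ω := div_pos (neg_pos.2 (log_neg hθ₀ hθ₁)) hL
  -- `ω` is chosen so that one shift by `L` costs exactly the factor `θ`
  have hθω : θ * exp (ω * L) = 1 := by
    rw [div_mul_cancel₀ _ hL.ne', exp_neg, exp_log hθ₀, mul_inv_cancel₀ hθ₀.ne']
  set C := (|V z₀| + 1) * exp (-(ω * (z₀ - L)))
  have hC : 0 < C := by positivity
  have hbase : ∀ ξ, z₀ - L ≤ ξ → ξ ≤ z₀ → V ξ ≤ C * exp (ω * ξ) := fun ξ h₁ h₂ =>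
    calc V ξ ≤ |V z₀| + 1 := (hmono h₂).trans ((le_abs_self _).trans (lt_add_one _).le)
      _ ≤ C * exp (ω * ξ) := by
        rw [mul_assoc, ← exp_add]
        exact le_mul_of_one_le_right (by positivity)
          (one_le_exp (by nlinarith))
  have hband : ∀ n : ℕ, ∀ ξ, z₀ - (n + 1) * L ≤ ξ → ξ ≤ z₀ → V ξ ≤ C * exp (ω * ξ) := by
    intro n
    induction n with
    | zero => simpa using hbase
    | succ n ih =>
      intro ξ h₁ h₂
      rcases le_or_gt (z₀ - L) ξ with h | h
      · exact hbase ξ h h₂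
      calc V ξ = V (ξ + L - L) := by rw [add_sub_cancel_right]
        _ ≤ θ * V (ξ + L) := hshift _ (by linarith)
        _ ≤ θ * (C * exp (ω * (ξ + L))) :=
          mul_le_mul_of_nonneg_left (ih _ (by push_cast at h₁; linarith) (by linarith)) hθ₀.le
        _ = C * exp (ω * ξ) * (θ * exp (ω * L)) := by rw [mul_add, exp_add]; ring
        _ = C * exp (ω * ξ) := by rw [hθω, mul_one]
  refine ⟨ω, C, hω, hC, fun ξ hξ => ?_⟩
  obtain ⟨n, hn⟩ := exists_nat_gt ((z₀ - ξ) / L)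
  exact hband n ξ (by rw [div_lt_iff₀ hL] at hn; nlinarith) hξ

lemma exists_exp_bound_of_le_on_Iic {g : ℝ → ℝ} {M ω C a : ℝ} (hM : ∀ ξ, g ξ ≤ M)
    (hω : 0 ≤ ω) (hC : 0 < C) (hle : ∀ ξ ≤ a, g ξ ≤ C * exp (ω * ξ)) :
    ∃ C' : ℝ, 0 < C' ∧ ∀ ξ, g ξ ≤ C' * exp (ω * ξ) := by
  refine ⟨C + |M| * exp (-(ω * a)), by positivity, fun ξ => ?_⟩
  rw [add_mul, mul_assoc, ← exp_add]
  rcases le_or_gt ξ a with h | h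
  · nlinarith [hle ξ h, exp_pos (-(ω * a) + ω * ξ), abs_nonneg M]
  · have : 1 ≤ exp (-(ω * a) + ω * ξ) := one_le_exp (by nlinarith)
    nlinarith [hM ξ, le_abs_self M, abs_nonneg M, exp_pos (ω * ξ), hC]

lemma abs_delta1_le_one (α : ℝ) : |delta1 α| ≤ 1 := abs_cos_le_one α

lemma abs_delta2_le_one (α : ℝ) : |delta2 α| ≤ 1 := by
  have h3 : √3 ^ 2 = 3 := sq_sqrt (by norm_num)
  rw [← sq_le_one_iff_abs_le_one, delta2]
  nlinarith [sin_sq_add_cos_sq α, sq_nonneg (√3 / 2 * cos α - 1 / 2 * sin α)]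

lemma abs_delta3_le_one (α : ℝ) : |delta3 α| ≤ 1 := by
  have h3 : √3 ^ 2 = 3 := sq_sqrt (by norm_num)
  rw [← sq_le_one_iff_abs_le_one, delta3]
  nlinarith [sin_sq_add_cos_sq α, sq_nonneg (√3 / 2 * cos α + 1 / 2 * sin α)]

section Dh

variable {α : ℝ} {G : ℝ → ℝ}

lemma hasDerivAt_Dh {g : ℝ → ℝ} (hG : ∀ x, HasDerivAt G (g x) x) (ξ : ℝ) :
    HasDerivAt (Dh α G) (Dh α g ξ) ξ := by
  have ha : ∀ d, HasDerivAt (fun x => G (x + d)) (g (ξ + d)) ξ :=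
    fun d => (hG _).comp_add_const ξ d
  have hs : ∀ d, HasDerivAt (fun x => G (x - d)) (g (ξ - d)) ξ :=
    fun d => (hG _).comp_sub_const ξ d
  exact ((((ha _).add (hs _)).add ((ha _).add (hs _))).add ((ha _).add (hs _))).sub
    ((hG ξ).const_mul 6)

lemma tendsto_Dh_atBot (hG : Tendsto G atBot (𝓝 0)) : Tendsto (Dh α G) atBot (𝓝 0) := by
  have ha : ∀ d, Tendsto (fun x => G (x + d)) atBot (𝓝 0) :=
    fun d => hG.comp (tendsto_atBot_add_const_right _ d tendsto_id)
  have hs : ∀ d, Tendsto (fun x => G (x - d)) atBot (𝓝 0) := fun d => by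
    simpa only [sub_eq_add_neg] using ha (-d)
  have key : Tendsto (Dh α G) atBot (𝓝 (0 + 0 + (0 + 0) + (0 + 0) - 6 * 0)) :=
    ((((ha _).add (hs _)).add ((ha _).add (hs _))).add ((ha _).add (hs _))).sub (hG.const_mul 6)
  simpa using key

lemma tendsto_Dh_atTop {L : ℝ} (hG : ∀ a, Tendsto (fun x => G (x + a) - G x) atTop (𝓝 (a * L))) :
    Tendsto (Dh α G) atTop (𝓝 0) := by
  have hs : ∀ d, Tendsto (fun x => G (x - d) - G x) atTop (𝓝 (-d * L)) := fun d => by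
    simpa only [sub_eq_add_neg] using hG (-d)
  have key := (((hG (delta1 α)).add (hs (delta1 α))).add
    ((hG (delta2 α)).add (hs (delta2 α)))).add ((hG (delta3 α)).add (hs (delta3 α)))
  simp only [neg_mul, add_neg_cancel, add_zero] at key
  refine key.congr fun x => ?_
  rw [Dh]; ring

lemma le_Dh_of_monotone (hG : Monotone G) (ξ : ℝ) : 6 * (G (ξ - 1) - G ξ) ≤ Dh α G ξ := by
  have h : ∀ d, |d| ≤ 1 → G (ξ - 1) ≤ G (ξ + d) ∧ G (ξ - 1) ≤ G (ξ - d) := fun d hd =>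
    ⟨hG (by linarith [neg_abs_le d]), hG (by linarith [le_abs_self d])⟩
  have h₁ := h _ (abs_delta1_le_one α)
  have h₂ := h _ (abs_delta2_le_one α)
  have h₃ := h _ (abs_delta3_le_one α)
  rw [Dh]; linarith [h₁.1, h₁.2, h₂.1, h₂.2, h₃.1, h₃.2]

lemma Dh_le_of_monotone (hG : Monotone G) (ξ : ℝ) : Dh α G ξ ≤ 6 * (G (ξ + 1) - G ξ) := by
  have h : ∀ d, |d| ≤ 1 → G (ξ + d) ≤ G (ξ + 1) ∧ G (ξ - d) ≤ G (ξ + 1) := fun d hd =>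
    ⟨hG (by linarith [le_abs_self d]), hG (by linarith [neg_abs_le d])⟩
  have h₁ := h _ (abs_delta1_le_one α)
  have h₂ := h _ (abs_delta2_le_one α)
  have h₃ := h _ (abs_delta3_le_one α)
  rw [Dh]; linarith [h₁.1, h₁.2, h₂.1, h₂.2, h₃.1, h₃.2]

end Dh

namespace FisherKPP

variable {f f' : ℝ → ℝ}

lemma deriv_zero_pos (hf : FisherKPP f f') : 0 < f' 0 := hf.2.2.2.2.1

lemma continuousOn (hf : FisherKPP f f') : ContinuousOn f (Icc 0 1) :=
  fun s hs => (hf.1 s hs).continuousAt.continuousWithinAt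

lemma nonneg_and_le_mul (hf : FisherKPP f f') {s : ℝ} (hs : s ∈ Icc 0 1) :
    0 ≤ f s ∧ f s ≤ f' 0 * s := by
  obtain ⟨-, -, hf0, hf1, hf'0, hIoo⟩ := hf
  rcases hs.1.eq_or_lt with rfl | hs₀
  · simp [hf0]
  rcases hs.2.eq_or_lt with rfl | hs₁
  · simp [hf1, hf'0.le]
  exact ⟨(hIoo s ⟨hs₀, hs₁⟩).1.le, (hIoo s ⟨hs₀, hs₁⟩).2⟩

lemma pos_of_mem_Ioo (hf : FisherKPP f f') {s : ℝ} (hs : s ∈ Ioo 0 1) : 0 < f s :=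
  (hf.2.2.2.2.2 s hs).1

lemma eventually_half_mul_le (hf : FisherKPP f f') : ∀ᶠ s in 𝓝[≥] 0, f' 0 / 2 * s ≤ f s :=
  eventually_mul_le_of_hasDerivAt (hf.1 0 ⟨le_rfl, zero_le_one⟩) hf.2.2.1
    (half_lt_self hf.deriv_zero_pos)

end FisherKPP

namespace IsTravelingWave

variable {α c : ℝ} {f f' U : ℝ → ℝ}

lemma continuous (hU : IsTravelingWave α f c U) : Continuous U := hU.1.continuous

lemma mem_Icc (hU : IsTravelingWave α f c U) (ξ : ℝ) : U ξ ∈ Icc 0 1 := hU.2.1 ξ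

lemma nonneg (hU : IsTravelingWave α f c U) : 0 ≤ U := fun ξ => (hU.mem_Icc ξ).1

lemma tendsto_atBot (hU : IsTravelingWave α f c U) : Tendsto U atBot (𝓝 0) := hU.2.2.2.1

lemma tendsto_atTop (hU : IsTravelingWave α f c U) : Tendsto U atTop (𝓝 1) := hU.2.2.2.2

lemma comp_continuous (hU : IsTravelingWave α f c U) (hf : FisherKPP f f') :
    Continuous fun ξ => f (U ξ) :=
  hf.continuousOn.comp_continuous hU.continuous hU.mem_Icc

lemma comp_nonneg (hU : IsTravelingWave α f c U) (hf : FisherKPP f f') :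
    0 ≤ fun ξ => f (U ξ) :=
  fun ξ => (hf.nonneg_and_le_mul (hU.mem_Icc ξ)).1

lemma comp_le (hU : IsTravelingWave α f c U) (hf : FisherKPP f f') (ξ : ℝ) :
    f (U ξ) ≤ f' 0 * U ξ :=
  (hf.nonneg_and_le_mul (hU.mem_Icc ξ)).2

lemma sub_Dh_sub_eq (hU : IsTravelingWave α f c U) {G H : ℝ → ℝ}
    (hG : ∀ x, HasDerivAt G (U x) x) (hH : ∀ x, HasDerivAt H (f (U x)) x) (x y : ℝ) :
    c * U x - 1 / 6 * Dh α G x - H x = c * U y - 1 / 6 * Dh α G y - H y := by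
  obtain ⟨hC1, -, heq, -, -⟩ := hU
  have hderiv : ∀ ξ, HasDerivAt (fun ξ => c * U ξ - 1 / 6 * Dh α G ξ - H ξ) 0 ξ := fun ξ => by
    have := ((((hC1.differentiable one_ne_zero ξ).hasDerivAt).const_mul c).sub
      ((hasDerivAt_Dh (α := α) hG ξ).const_mul (1 / 6))).sub (hH ξ)
    rwa [heq, add_sub_cancel_left, sub_self] at this
  exact is_const_of_deriv_eq_zero (fun ξ => (hderiv ξ).differentiableAt)
    (fun ξ => (hderiv ξ).deriv) x y

lemma sub_le_of_hasDerivAt (hU : IsTravelingWave α f c U) {H : ℝ → ℝ}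
    (hH : ∀ x, HasDerivAt H (f (U x)) x) (x y : ℝ) : H y - H x ≤ |c| + 2 := by
  set G := fun b => ∫ t in (0 : ℝ)..b, U t
  have hG : ∀ x, HasDerivAt G (U x) x :=
    fun x => (hU.continuous.integral_hasStrictDerivAt 0 x).hasDerivAt
  have hGmono : Monotone G := monotone_of_hasDerivAt_nonneg hG hU.nonneg
  -- `G` grows by at most `1` over a unit interval since `U ≤ 1`
  have hGlip : Monotone fun b => b - G b := monotone_of_hasDerivAt_nonneg
    (fun x => (hasDerivAt_id x).sub (hG x)) fun x => sub_nonneg.2 (hU.mem_Icc x).2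
  have hy := le_Dh_of_monotone (α := α) hGmono y
  have hx := Dh_le_of_monotone (α := α) hGmono x
  have hy' := hGlip (sub_one_lt y).le
  have hx' := hGlip (lt_add_one x).le
  have hcU : c * (U y - U x) ≤ |c| := by
    calc c * (U y - U x) ≤ |c| * |U y - U x| := by rw [← abs_mul]; exact le_abs_self _
      _ ≤ |c| * 1 := by
        gcongr
        exact abs_sub_le_of_nonneg_of_le (hU.mem_Icc y).1 (hU.mem_Icc y).2 (hU.mem_Icc x).1
          (hU.mem_Icc x).2
      _ = |c| := mul_one _
  have := hU.sub_Dh_sub_eq hG hH x y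
  simp only at hy' hx'
  linarith

lemma exists_half_mul_le (hU : IsTravelingWave α f c U) (hf : FisherKPP f f') :
    ∃ ξ₀, ∀ ξ ≤ ξ₀, f' 0 / 2 * U ξ ≤ f (U ξ) :=
  eventually_atBot.1 <| (tendsto_nhdsWithin_iff.2
    ⟨hU.tendsto_atBot, Eventually.of_forall hU.nonneg⟩).eventually hf.eventually_half_mul_le

lemma exists_primitive_comp (hU : IsTravelingWave α f c U) (hf : FisherKPP f f') :
    ∃ F : ℝ → ℝ, (∀ x, HasDerivAt F (f (U x)) x) ∧ Tendsto F atBot (𝓝 0) := by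
  have hH : ∀ x, HasDerivAt (fun b => ∫ t in (0 : ℝ)..b, f (U t)) (f (U x)) x :=
    fun x => ((hU.comp_continuous hf).integral_hasStrictDerivAt 0 x).hasDerivAt
  exact exists_hasDerivAt_tendsto_atBot_zero hH (hU.comp_nonneg hf)
    (a := 0) (B := -(|c| + 2)) fun x _ => by
      have := hU.sub_le_of_hasDerivAt hH x 0
      rw [intervalIntegral.integral_same] at this
      linarith

lemma exists_primitive (hU : IsTravelingWave α f c U) (hf : FisherKPP f f') :
    ∃ V : ℝ → ℝ, (∀ x, HasDerivAt V (U x) x) ∧ Tendsto V atBot (𝓝 0) := by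
  obtain ⟨F, hF, hF0⟩ := hU.exists_primitive_comp hf
  obtain ⟨ξ₀, hξ₀⟩ := hU.exists_half_mul_le hf
  set G := fun b => ∫ t in (0 : ℝ)..b, U t
  have hG : ∀ x, HasDerivAt G (U x) x :=
    fun x => (hU.continuous.integral_hasStrictDerivAt 0 x).hasDerivAt
  set β := f' 0 / 2
  have hβ : 0 < β := half_pos hf.deriv_zero_pos
  have hFnonneg : ∀ x, 0 ≤ F x :=
    (monotone_of_hasDerivAt_nonneg hF (hU.comp_nonneg hf)).le_of_tendsto hF0
  have hmono : MonotoneOn (fun x => F x - β * G x) (Iic ξ₀) :=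
    monotoneOn_Iic_of_hasDerivAt_nonneg (fun x => (hF x).sub ((hG x).const_mul β))
      fun x hx => sub_nonneg.2 (hξ₀ x hx)
  refine exists_hasDerivAt_tendsto_atBot_zero hG hU.nonneg (a := ξ₀)
    (B := G ξ₀ - F ξ₀ / β) fun x hx => ?_
  have h := hmono hx (mem_Iic.2 le_rfl) hx
  simp only at h
  have : β * (G ξ₀ - F ξ₀ / β) ≤ β * G x := by
    rw [mul_sub, mul_div_cancel₀ _ hβ.ne']
    linarith [hFnonneg x]
  exact le_of_mul_le_mul_left this hβ

lemma mul_eq_Dh_add (hU : IsTravelingWave α f c U) {V F : ℝ → ℝ}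
    (hV : ∀ x, HasDerivAt V (U x) x) (hV0 : Tendsto V atBot (𝓝 0))
    (hF : ∀ x, HasDerivAt F (f (U x)) x) (hF0 : Tendsto F atBot (𝓝 0)) (ξ : ℝ) :
    c * U ξ = 1 / 6 * Dh α V ξ + F ξ := by
  have hlim : Tendsto (fun x => c * U x - 1 / 6 * Dh α V x - F x) atBot
      (𝓝 (c * 0 - 1 / 6 * 0 - 0)) :=
    ((hU.tendsto_atBot.const_mul c).sub ((tendsto_Dh_atBot hV0).const_mul _)).sub hF0
  rw [mul_zero, mul_zero, sub_zero, sub_zero] at hlim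
  have hconst : c * U ξ - 1 / 6 * Dh α V ξ - F ξ = 0 :=
    tendsto_nhds_unique tendsto_const_nhds (hlim.congr fun x => (hU.sub_Dh_sub_eq hV hF ξ x).symm)
  linarith

lemma speed_pos (hU : IsTravelingWave α f c U) (hf : FisherKPP f f') : 0 < c := by
  obtain ⟨V, hV, hV0⟩ := hU.exists_primitive hf
  obtain ⟨F, hF, hF0⟩ := hU.exists_primitive_comp hf
  have hFmono : Monotone F := monotone_of_hasDerivAt_nonneg hF (hU.comp_nonneg hf)
  have hFtop : Tendsto F atTop (𝓝 c) := by
    have hDh := tendsto_Dh_atTop (α := α) (tendsto_add_sub_of_hasDerivAt hV hU.tendsto_atTop)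
    have := (hU.tendsto_atTop.const_mul c).sub (hDh.const_mul (1 / 6))
    simp only [mul_one, mul_zero, sub_zero] at this
    exact this.congr fun x => by rw [hU.mul_eq_Dh_add hV hV0 hF hF0 x]; ring
  obtain ⟨ξ, hξ⟩ : (1 / 2 : ℝ) ∈ range U := mem_range_of_exists_le_of_exists_ge hU.continuous
    (hU.tendsto_atBot.eventually_le_const (by norm_num)).exists
    (hU.tendsto_atTop.eventually_const_le (by norm_num)).exists
  refine hFmono.pos_of_tendsto_of_hasDerivAt hF0 hFtop (hF ξ) ?_
  rw [hξ]
  exact (hf.pos_of_mem_Ioo ⟨by norm_num, by norm_num⟩).ne'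

lemma exists_exp_bound_on_Iic (hU : IsTravelingWave α f c U) (hf : FisherKPP f f') :
    ∃ ω C a : ℝ, 0 < ω ∧ 0 < C ∧ ∀ ξ ≤ a, U ξ ≤ C * exp (ω * ξ) := by
  obtain ⟨V, hV, hV0⟩ := hU.exists_primitive hf
  obtain ⟨F, hF, hF0⟩ := hU.exists_primitive_comp hf
  obtain ⟨ξ₀, hξ₀⟩ := hU.exists_half_mul_le hf
  have hc := hU.speed_pos hf
  have hf'0 := hf.deriv_zero_pos
  set β := f' 0 / 2
  have hVmono : Monotone V := monotone_of_hasDerivAt_nonneg hV hU.nonneg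
  have hVnonneg : ∀ x, 0 ≤ V x := hVmono.le_of_tendsto hV0
  have hidentity := hU.mul_eq_Dh_add hV hV0 hF hF0
  have hβV : ∀ x ≤ ξ₀, β * V x ≤ F x :=
    le_of_hasDerivAt_le_of_tendsto_atBot (fun x => (hV x).const_mul β) hF hξ₀
      (by simpa using hV0.const_mul β) hF0
  have hFV : ∀ x, F x ≤ f' 0 * V x := fun x =>
    le_of_hasDerivAt_le_of_tendsto_atBot hF (fun x => (hV x).const_mul (f' 0))
      (fun y _ => hU.comp_le hf y) hF0 (by simpa using hV0.const_mul (f' 0))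
      x le_rfl
  have hdelay : ∀ ξ ≤ ξ₀, β * V ξ ≤ c * U ξ + (V ξ - V (ξ - 1)) := fun ξ hξ => by
    linarith [hβV ξ hξ, hidentity ξ, le_Dh_of_monotone (α := α) hVmono ξ]
  obtain ⟨ω, C, hω, hC, hVexp⟩ := exists_exp_bound_of_le_mul_shift hVmono
    (by positivity) ((div_lt_one (by positivity)).2 (by linarith)) two_pos
    (le_div_mul_of_delay_ineq (half_pos hf'0) hc.le hV hVmono hdelay)
  refine ⟨ω, (1 + f' 0) / c * C * exp ω, ξ₀ - 1, hω, by positivity, fun ξ hξ => ?_⟩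
  have hUV : c * U ξ ≤ (1 + f' 0) * V (ξ + 1) := by
    have := hVmono (lt_add_one ξ).le
    nlinarith [hidentity ξ, Dh_le_of_monotone (α := α) hVmono ξ, hFV ξ, hVnonneg ξ]
  calc U ξ ≤ (1 + f' 0) / c * V (ξ + 1) := by
        rw [div_mul_eq_mul_div, le_div_iff₀ hc, mul_comm]; exact hUV
    _ ≤ (1 + f' 0) / c * (C * exp (ω * (ξ + 1))) := by
        gcongr
        exact hVexp _ (by linarith)
    _ = (1 + f' 0) / c * C * exp ω * exp (ω * ξ) := by
        rw [mul_add, mul_one, exp_add]; ring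

end IsTravelingWave

theorem stmt15 (α : ℝ) (f f' : ℝ → ℝ) (hf : FisherKPP f f')
    (c : ℝ) (U : ℝ → ℝ) (hU : IsTravelingWave α f c U) :
    ∃ ω C : ℝ, 0 < ω ∧ 0 < C ∧ ∀ ξ : ℝ, ξ ≤ 0 → U ξ ≤ C * Real.exp (ω * ξ) := by
  obtain ⟨ω, C, a, hω, hC, hle⟩ := hU.exists_exp_bound_on_Iic hf
  obtain ⟨C', hC', hle'⟩ := exists_exp_bound_of_le_on_Iic (fun ξ => (hU.mem_Icc ξ).2) hω.le hC hle
  exact ⟨ω, C', hω, hC', fun ξ _ => hle' ξ⟩
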